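/- arXiv:1004.2924 — 5 statements merged into one kernel-verified Lean document; each statement's English description precedes it below -/
import Mathlib

section
/- Let O be a ring, V a left O-module, and p = (p_1,…,p_m) ∈ V^m. Let ker κ_p := {(o_1,…,o_m) ∈ O^{1×m} | Σ_i o_i • p_i = 0}, a left submodule of O^{1×m}, and suppose the rows of the matrix R ∈ O^{r×m} generate ker κ_p. Define Sol(R) := {g ∈ V^m | R • g = 0}, where R • g denotes the vector whose i-th entry is Σ_j R_{ij} • g_j. Then: (1) p ∈ Sol(R); and (2) for every r′ ∈ ℕ and every matrix R′ ∈ O^{r′×m} with R′ • p = 0, one has Sol(R) ⊆ Sol(R′). In other words, Sol(R) is the most powerful unfalsified model of {p}. -/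
/-! The row vectors annihilating `g` form the kernel of the `O`-linear map `o ↦ ∑ⱼ oⱼ • gⱼ`, a
submodule; so if `R • g = 0`, the whole span of the rows of `R` annihilates `g`, and by the
generation hypothesis that span contains every row of an `R'` with `R' • p = 0`. -/

theorem sum_smul_eq_zero_of_mem_span_rows {O V ι κ : Type*} [Semiring O] [AddCommMonoid V]
    [Module O V] [Fintype ι] (g : ι → V) (R : κ → ι → O) (hg : ∀ k, ∑ j, R k j • g j = 0)
    {o : ι → O} (ho : o ∈ Submodule.span O (Set.range R)) : ∑ j, o j • g j = 0 :=
  have hspan : Submodule.span O (Set.range R) ≤ LinearMap.ker (Fintype.linearCombination O g) :=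
    Submodule.span_le.mpr <| Set.range_subset_iff.mpr hg
  hspan ho

/-- Let `O` be a ring, `V` a left `O`-module and `p ∈ V^m`. Suppose the rows of
`R ∈ O^{r×m}` generate the left submodule `ker κ_p = {o ∈ O^{1×m} | ∑ᵢ oᵢ • pᵢ = 0}` of
`O^{1×m}` (i.e. every row of `R` lies in `ker κ_p` and every element of `ker κ_p` lies in
the span of the rows of `R`). Then `Sol(R) = {g ∈ V^m | R • g = 0}` is the most powerful
unfalsified model of `{p}`: (1) `p ∈ Sol(R)`, and (2) for every matrix `R' ∈ O^{r'×m}`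
with `R' • p = 0` one has `Sol(R) ⊆ Sol(R')`. -/
theorem vmpum_single_signal {O V : Type*} [Ring O] [AddCommGroup V] [Module O V]
    {m r : ℕ} (p : Fin m → V) (R : Fin r → Fin m → O)
    (hRker : ∀ i, ∑ j, R i j • p j = 0)
    (hRgen : ∀ o : Fin m → O, ∑ j, o j • p j = 0 → o ∈ Submodule.span O (Set.range R)) :
    (∀ i, ∑ j, R i j • p j = 0) ∧
    (∀ (r' : ℕ) (R' : Fin r' → Fin m → O), (∀ i, ∑ j, R' i j • p j = 0) →
      ∀ g : Fin m → V, (∀ i, ∑ j, R i j • g j = 0) → ∀ i, ∑ j, R' i j • g j = 0) :=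
  ⟨hRker, fun _ R' hR' g hg i => sum_smul_eq_zero_of_mem_span_rows g R hg (hRgen (R' i) (hR' i))⟩
end

section
/- Let O be a ring, V a left O-module, and ω_1,…,ω_N ∈ V^m. Suppose the rows of the matrix R ∈ O^{r×m} generate the left submodule ⋂_{i=1}^N ker κ_{ω_i} of O^{1×m}, where ker κ_{ω} := {(o_1,…,o_m) ∈ O^{1×m} | Σ_j o_j • ω_j = 0}. Define Sol(R) := {g ∈ V^m | R • g = 0}. Then: (1) ω_i ∈ Sol(R) for every i; and (2) for every matrix R′ ∈ O^{r′×m} with R′ • ω_i = 0 for all i, one has Sol(R) ⊆ Sol(R′). -/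
-- The row vectors annihilating `g` form the kernel of `Fintype.linearCombination O g`.
theorem sum_smul_eq_zero_of_mem_span_range {O V ι κ : Type*} [Ring O] [AddCommGroup V]
    [Module O V] [Fintype ι] {R : κ → ι → O} {g : ι → V} (hg : ∀ i, ∑ j, R i j • g j = 0)
    {o : ι → O} (ho : o ∈ Submodule.span O (Set.range R)) : ∑ j, o j • g j = 0 := by
  have hle : Submodule.span O (Set.range R) ≤ LinearMap.ker (Fintype.linearCombination O g) :=
    Submodule.span_le.mpr <| Set.range_subset_iff.mpr fun i => by
      simpa [Fintype.linearCombination_apply] using hg i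
  simpa [Fintype.linearCombination_apply] using hle ho

/-- Let `O` be a ring, `V` a left `O`-module and `ω_1, …, ω_N ∈ V^m`. Suppose the rows of
`R ∈ O^{r×m}` generate the left submodule `⋂ₖ ker κ_{ω_k}` of `O^{1×m}`, where
`ker κ_ω = {o ∈ O^{1×m} | ∑ⱼ oⱼ • ωⱼ = 0}`. Then with `Sol(R) = {g ∈ V^m | R • g = 0}`:
(1) each `ω_k ∈ Sol(R)`, and (2) for every matrix `R' ∈ O^{r'×m}` with `R' • ω_k = 0` for
all `k`, one has `Sol(R) ⊆ Sol(R')`. -/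
theorem vmpum_finitely_many_signals {O V : Type*} [Ring O] [AddCommGroup V] [Module O V]
    {m r N : ℕ} (ω : Fin N → Fin m → V) (R : Fin r → Fin m → O)
    (hRker : ∀ k i, ∑ j, R i j • ω k j = 0)
    (hRgen : ∀ o : Fin m → O, (∀ k, ∑ j, o j • ω k j = 0) →
      o ∈ Submodule.span O (Set.range R)) :
    (∀ k i, ∑ j, R i j • ω k j = 0) ∧
    (∀ (r' : ℕ) (R' : Fin r' → Fin m → O), (∀ k i, ∑ j, R' i j • ω k j = 0) →
      ∀ g : Fin m → V, (∀ i, ∑ j, R i j • g j = 0) → ∀ i, ∑ j, R' i j • g j = 0) :=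
  ⟨hRker, fun _ R' hR' _ hg i =>
    sum_smul_eq_zero_of_mem_span_range hg (hRgen (R' i) fun k => hR' k i)⟩
end

section
/- Let p = (p_1,…,p_m) ∈ ℂ[x_1,…,x_n]^m be nonzero and let ker κ_p := {(o_1,…,o_m) ∈ W_n^{1×m} | Σ_i o_i • p_i = 0}. Then the left W_n-module W_n^{1×m} / ker κ_p is cyclic: there exists a left ideal L_p of W_n such that W_n^{1×m} / ker κ_p is isomorphic to W_n / L_p as left W_n-modules. -/
set_option synthInstance.maxHeartbeats 400000
set_option maxHeartbeats 1000000

open MvPolynomial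

noncomputable def mulOp (n : ℕ) (i : Fin n) : Module.End ℂ (MvPolynomial (Fin n) ℂ) :=
  (Algebra.lmul ℂ (MvPolynomial (Fin n) ℂ)) (X i)

noncomputable def derOp (n : ℕ) (i : Fin n) : Module.End ℂ (MvPolynomial (Fin n) ℂ) :=
  (pderiv (R := ℂ) i).toLinearMap

noncomputable def WeylSub (n : ℕ) : Subalgebra ℂ (Module.End ℂ (MvPolynomial (Fin n) ℂ)) :=
  Algebra.adjoin ℂ (Set.range (mulOp n) ∪ Set.range (derOp n))

def Weyl (n : ℕ) : Type := WeylSub n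

noncomputable instance (n : ℕ) : Ring (Weyl n) := inferInstanceAs (Ring (WeylSub n))

noncomputable instance (n : ℕ) : Module (Weyl n) (MvPolynomial (Fin n) ℂ) :=
  inferInstanceAs (Module (WeylSub n) (MvPolynomial (Fin n) ℂ))

/-- The map `κ_p : W_n^{1×m} → ℂ[x_1,…,x_n]`, `(o_1,…,o_m) ↦ ∑ᵢ oᵢ • pᵢ`. -/
noncomputable def kappaW (n m : ℕ) (p : Fin m → MvPolynomial (Fin n) ℂ) :
    (Fin m → Weyl n) →ₗ[Weyl n] MvPolynomial (Fin n) ℂ where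
  toFun o := ∑ i, o i • p i
  map_add' o o' := by simp [add_smul, Finset.sum_add_distrib]
  map_smul' c o := by simp [Finset.smul_sum, mul_smul, smul_eq_mul]

/-!
`ℂ[x_1,…,x_n]` is a simple `W_n`-module: partial derivatives take any nonzero polynomial down
to a nonzero constant, and multiplication operators take that constant to any polynomial.
Hence `κ_p`, being nonzero, is onto, so `W_n^{1×m} / ker κ_p ≅ ℂ[x_1,…,x_n]`, and a simple
module is `W_n / L` for a (maximal) left ideal `L`.
-/

namespace MvPolynomial

variable {R σ : Type*} [CommSemiring R] {q : MvPolynomial σ R}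

theorem totalDegree_pderiv_lt (hq : q.totalDegree ≠ 0) (i : σ) :
    (pderiv i q).totalDegree < q.totalDegree := by
  refine (Finset.sup_lt_iff (Nat.pos_of_ne_zero hq)).mpr fun m hm => ?_
  have hmi : m + Finsupp.single i 1 ∈ q.support := by
    rw [mem_support_iff, coeff_pderiv] at hm
    exact mem_support_iff.mpr (left_ne_zero_of_mul hm)
  have hdeg := le_totalDegree hmi
  rw [Finsupp.sum_add_index' (fun _ => rfl) (fun _ _ _ => rfl), Finsupp.sum_single_index rfl]
    at hdeg
  omega

theorem exists_pderiv_ne_zero [NoZeroDivisors R] [CharZero R] (hq : q.totalDegree ≠ 0) :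
    ∃ i, pderiv i q ≠ 0 := by
  obtain ⟨d, hd, i, hdi⟩ : ∃ d ∈ q.support, ∃ i, d i ≠ 0 := by
    simpa [totalDegree_eq_zero_iff] using hq
  refine ⟨i, ne_zero_iff.mpr ⟨d - Finsupp.single i 1, ?_⟩⟩
  have hle : Finsupp.single i 1 ≤ d := Finsupp.single_le_iff.mpr (Nat.one_le_iff_ne_zero.mpr hdi)
  rw [coeff_pderiv, tsub_add_cancel_of_le hle]
  exact mul_ne_zero (mem_support_iff.mp hd) (Nat.cast_add_one_ne_zero _)

end MvPolynomial

namespace Weyl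

variable {n : ℕ}

theorem lmul_mem_weylSub (r : MvPolynomial (Fin n) ℂ) :
    Algebra.lmul ℂ (MvPolynomial (Fin n) ℂ) r ∈ WeylSub n := by
  suffices ⊤ ≤ (WeylSub n).comap (Algebra.lmul ℂ (MvPolynomial (Fin n) ℂ)) from this trivial
  rw [← adjoin_range_X, Algebra.adjoin_le_iff]
  rintro _ ⟨i, rfl⟩
  exact Algebra.subset_adjoin (Or.inl ⟨i, rfl⟩)

noncomputable def mulPoly (r : MvPolynomial (Fin n) ℂ) : Weyl n :=
  ⟨Algebra.lmul ℂ _ r, lmul_mem_weylSub r⟩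

noncomputable def partialDeriv (i : Fin n) : Weyl n :=
  ⟨derOp n i, Algebra.subset_adjoin (Or.inr ⟨i, rfl⟩)⟩

theorem mulPoly_smul (r q : MvPolynomial (Fin n) ℂ) : mulPoly r • q = r * q := rfl

theorem partialDeriv_smul (i : Fin n) (q : MvPolynomial (Fin n) ℂ) :
    partialDeriv i • q = pderiv i q := rfl

theorem exists_smul_eq_one {q : MvPolynomial (Fin n) ℂ} (hq : q ≠ 0) :
    ∃ o : Weyl n, o • q = 1 := by
  induction hD : q.totalDegree using Nat.strong_induction_on generalizing q with
  | _ D ih =>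
    rcases eq_or_ne q.totalDegree 0 with h0 | h0
    · obtain ⟨c, rfl⟩ : ∃ c, q = C c := ⟨_, totalDegree_eq_zero_iff_eq_C.mp h0⟩
      have hc : c ≠ 0 := fun h => hq (by rw [h, C_0])
      exact ⟨mulPoly (C c⁻¹), by rw [mulPoly_smul, ← C_mul, inv_mul_cancel₀ hc, C_1]⟩
    · obtain ⟨i, hi⟩ := exists_pderiv_ne_zero h0
      obtain ⟨o, ho⟩ := ih _ (hD ▸ totalDegree_pderiv_lt h0 i) hi rfl
      exact ⟨o * partialDeriv i, by rw [mul_smul, partialDeriv_smul, ho]⟩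

instance : IsSimpleModule (Weyl n) (MvPolynomial (Fin n) ℂ) :=
  isSimpleModule_iff_toSpanSingleton_surjective.mpr ⟨inferInstance, fun q hq r => by
    obtain ⟨o, ho⟩ := exists_smul_eq_one hq
    exact ⟨mulPoly r * o, by
      rw [LinearMap.toSpanSingleton_apply, mul_smul, ho, mulPoly_smul, mul_one]⟩⟩

end Weyl

theorem kappaW_single (n m : ℕ) (p : Fin m → MvPolynomial (Fin n) ℂ) (i : Fin m) :
    kappaW n m p (Pi.single i 1) = p i := by
  simp [kappaW, Pi.single_apply]

theorem kappaW_surjective {n m : ℕ} {p : Fin m → MvPolynomial (Fin n) ℂ} (hp : p ≠ 0) :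
    Function.Surjective (kappaW n m p) := by
  obtain ⟨i, hi⟩ := Function.ne_iff.mp hp
  refine LinearMap.surjective_of_ne_zero fun h => hi ?_
  rw [← kappaW_single n m p i, h, LinearMap.zero_apply, Pi.zero_apply]

/-- For a nonzero vector of polynomials `p ∈ ℂ[x_1,…,x_n]^m`, the left `W_n`-module
`W_n^{1×m} / ker κ_p` is cyclic: there is a left ideal `L_p ⊆ W_n` with
`W_n^{1×m} / ker κ_p ≅ W_n / L_p` as left `W_n`-modules. -/
theorem quotient_by_ker_kappa_cyclic (n m : ℕ)
    (p : Fin m → MvPolynomial (Fin n) ℂ) (hp : p ≠ 0) :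
    ∃ L : Ideal (Weyl n),
      Nonempty (((Fin m → Weyl n) ⧸ LinearMap.ker (kappaW n m p)) ≃ₗ[Weyl n]
        ((Weyl n) ⧸ L)) := by
  obtain ⟨L, -, ⟨e⟩⟩ :=
    (isSimpleModule_iff_quot_maximal (R := Weyl n) (M := MvPolynomial (Fin n) ℂ)).mp inferInstance
  exact ⟨L, ⟨(LinearMap.quotKerEquivOfSurjective _ (kappaW_surjective hp)).trans e⟩⟩
end

section
/- The polynomial ring ℂ[x_1,…,x_n], with the left W_n-module structure given by applying operators, is a simple W_n-module: its only W_n-submodules are 0 and ℂ[x_1,…,x_n]. Equivalently, for every nonzero polynomial p ∈ ℂ[x_1,…,x_n], the set {o • p | o ∈ W_n} equals all of ℂ[x_1,…,x_n]. -/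
set_option synthInstance.maxHeartbeats 400000
set_option maxHeartbeats 1000000

open MvPolynomial

/-! Every nonzero polynomial is taken to a nonzero constant by a product of partial derivatives:
differentiate in a variable that occurs in it, which lowers the total degree without killing it
(characteristic zero). Multiplication operators then turn that constant into any `q`, so every
nonzero polynomial generates the whole module. -/

section PDeriv

variable {σ R : Type*}

theorem MvPolynomial.totalDegree_pderiv_lt_s11 [CommSemiring R] {p : MvPolynomial σ R} {i : σ}
    (h : pderiv i p ≠ 0) : (pderiv i p).totalDegree < p.totalDegree := by
  obtain ⟨m, hm, hdeg⟩ := Finset.exists_mem_eq_sup _ (support_nonempty.mpr h)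
    fun s : σ →₀ ℕ => s.sum fun _ e => e
  have hm' : m + Finsupp.single i 1 ∈ p.support := by
    rw [mem_support_iff, coeff_pderiv] at hm
    exact mem_support_iff.mpr (left_ne_zero_of_mul hm)
  calc (pderiv i p).totalDegree = m.sum (fun _ e => e) := hdeg
    _ < (m + Finsupp.single i 1).sum (fun _ e => e) := by
      rw [Finsupp.sum_add_index' (fun _ => rfl) (fun _ _ _ => rfl), Finsupp.sum_single_index rfl]
      omega
    _ ≤ p.totalDegree := le_totalDegree hm'

theorem MvPolynomial.pderiv_ne_zero_of_mem_support [CommSemiring R] [NoZeroDivisors R]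
    [CharZero R] {p : MvPolynomial σ R} {m : σ →₀ ℕ} (hm : m ∈ p.support) {i : σ}
    (hi : m i ≠ 0) : pderiv i p ≠ 0 := by
  have hle : Finsupp.single i 1 ≤ m := Finsupp.single_le_iff.mpr (Nat.one_le_iff_ne_zero.mpr hi)
  have hcoeff : coeff (m - Finsupp.single i 1) (pderiv i p) ≠ 0 := by
    rw [coeff_pderiv, tsub_add_cancel_of_le hle]
    exact mul_ne_zero (mem_support_iff.mp hm) (Nat.cast_add_one_ne_zero _)
  exact fun h => hcoeff (by rw [h, coeff_zero])

theorem MvPolynomial.exists_pderiv_ne_zero_of_totalDegree_pos [CommSemiring R]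
    [NoZeroDivisors R] [CharZero R] {p : MvPolynomial σ R} (h : 0 < p.totalDegree) :
    ∃ i, pderiv i p ≠ 0 := by
  obtain ⟨m, hm, hpos⟩ := Finset.lt_sup_iff.mp h
  obtain ⟨i, hi⟩ : ∃ i, m i ≠ 0 := by
    by_contra! hzero
    simp [Finsupp.sum, hzero] at hpos
  exact ⟨i, pderiv_ne_zero_of_mem_support hm hi⟩

end PDeriv

section Weyl

variable {n : ℕ}

theorem lmul_mem_weylSub (q : MvPolynomial (Fin n) ℂ) :
    Algebra.lmul ℂ (MvPolynomial (Fin n) ℂ) q ∈ WeylSub n := by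
  have hX : Algebra.adjoin ℂ (Set.range X) ≤
      (WeylSub n).comap (Algebra.lmul ℂ (MvPolynomial (Fin n) ℂ)) :=
    Algebra.adjoin_le fun _ ⟨i, hi⟩ => Algebra.subset_adjoin (Or.inl ⟨i, by rw [← hi]; rfl⟩)
  exact hX (by rw [adjoin_range_X]; trivial)

theorem derOp_mem_weylSub (i : Fin n) : derOp n i ∈ WeylSub n :=
  Algebra.subset_adjoin (Or.inr ⟨i, rfl⟩)

theorem exists_mem_weylSub_apply_eq_one {p : MvPolynomial (Fin n) ℂ} (hp : p ≠ 0) :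
    ∃ o ∈ WeylSub n, o p = 1 := by
  induction hd : p.totalDegree using Nat.strong_induction_on generalizing p with
  | _ d ih =>
    rcases Nat.eq_zero_or_pos d with rfl | hpos
    · obtain ⟨c, rfl⟩ : ∃ c, p = C c := ⟨_, totalDegree_eq_zero_iff_eq_C.mp hd⟩
      have hc : c ≠ 0 := fun h0 => hp (by rw [h0, C_0])
      refine ⟨_, lmul_mem_weylSub (C c⁻¹), ?_⟩
      change C c⁻¹ * C c = 1
      rw [← C_mul, inv_mul_cancel₀ hc, C_1]
    · obtain ⟨i, hi⟩ := exists_pderiv_ne_zero_of_totalDegree_pos (hd ▸ hpos)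
      obtain ⟨o, ho, hone⟩ := ih _ (hd ▸ totalDegree_pderiv_lt_s11 hi) hi rfl
      exact ⟨o * derOp n i, mul_mem ho (derOp_mem_weylSub i), hone⟩

theorem weyl_exists_smul_eq {p : MvPolynomial (Fin n) ℂ} (hp : p ≠ 0)
    (q : MvPolynomial (Fin n) ℂ) : ∃ o : Weyl n, o • p = q := by
  obtain ⟨o, ho, hone⟩ := exists_mem_weylSub_apply_eq_one hp
  refine ⟨⟨Algebra.lmul ℂ _ q * o, mul_mem (lmul_mem_weylSub q) ho⟩, ?_⟩
  change q * o p = q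
  rw [hone, mul_one]

end Weyl

/-- `ℂ[x_1,…,x_n]`, with operators acting by application, is a simple left `W_n`-module:
its only submodules are `⊥` and `⊤`; equivalently, for every nonzero polynomial `p` the
set `{o • p | o ∈ W_n}` is all of `ℂ[x_1,…,x_n]`. -/
theorem polynomialRing_isSimpleModule_weyl (n : ℕ) :
    IsSimpleModule (Weyl n) (MvPolynomial (Fin n) ℂ) ∧
    (∀ p : MvPolynomial (Fin n) ℂ, p ≠ 0 →
      ∀ q : MvPolynomial (Fin n) ℂ, ∃ o : Weyl n, o • p = q) :=
  ⟨isSimpleModule_iff_toSpanSingleton_surjective.mpr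
      ⟨inferInstance, fun _ hp q => weyl_exists_smul_eq hp q⟩,
    fun _ hp q => weyl_exists_smul_eq hp q⟩
end

section
/- Let K be an infinite field and λ ∈ (K∖{0})^n, and let exp_λ : ℕ^n → K be given by exp_λ(t) = λ_1^{t_1}⋯λ_n^{t_n}. For a linear difference operator with polynomial coefficients a = Σ_μ q_μ Δ^μ, define χ_λ(a) := Σ_μ q_μ ∏_{i=1}^n (λ_i^{-1}(Δ_i − λ_i + 1))^{μ_i}. Then for every polynomial p ∈ K[t_1,…,t_n] (identified with the function ℕ^n → K it defines), the identity χ_λ(a)(p·exp_λ) = (a p)·exp_λ holds as functions ℕ^n → K; consequently a p = 0 if and only if χ_λ(a)(p·exp_λ) = 0. -/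
/-- The forward difference operator `Δ_i` on functions `ℕ^n → K`:
`(Δ_i f)(t) = f(t + e_i) − f(t)`. -/
def fdiff {K : Type*} [Field K] (n : ℕ) (i : Fin n) (f : (Fin n → ℕ) → K) :
    (Fin n → ℕ) → K :=
  fun t => f (t + Pi.single i 1) - f t

/-- The iterated difference operator `Δ^μ = Δ_1^{μ_1} ⋯ Δ_n^{μ_n}`. -/
def fdiffPow {K : Type*} [Field K] (n : ℕ) (μ : Fin n → ℕ) (f : (Fin n → ℕ) → K) :
    (Fin n → ℕ) → K :=
  (List.finRange n).foldr (fun i g => (fdiff n i)^[μ i] g) f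

/-- The function `ℕ^n → K` defined by a polynomial in `K[t_1,…,t_n]`. -/
noncomputable def evalN {K : Type*} [Field K] {n : ℕ} (q : MvPolynomial (Fin n) K)
    (t : Fin n → ℕ) : K :=
  MvPolynomial.eval (fun i => ((t i : ℕ) : K)) q

/-- The action of a linear difference operator with polynomial coefficients
`a = ∑_μ q_μ Δ^μ` (given by its finitely supported coefficient family) on functions
`f : ℕ^n → K`: `(a f)(t) = ∑_μ q_μ(t)·(Δ^μ f)(t)`. -/
noncomputable def diffAct {K : Type*} [Field K] (n : ℕ)
    (a : (Fin n → ℕ) →₀ MvPolynomial (Fin n) K) (f : (Fin n → ℕ) → K) :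
    (Fin n → ℕ) → K :=
  fun t => a.sum fun μ q => evalN q t * fdiffPow n μ f t

/-- The discrete exponential function `exp_λ(t) = λ_1^{t_1} ⋯ λ_n^{t_n}`. -/
def expD {K : Type*} [Field K] {n : ℕ} (lam : Fin n → K) (t : Fin n → ℕ) : K :=
  ∏ i, lam i ^ (t i)

/-- The operator `λᵢ⁻¹(Δ_i − λᵢ + 1)` on functions `ℕ^n → K`. -/
noncomputable def chiDiff {K : Type*} [Field K] (n : ℕ) (c : K) (i : Fin n)
    (f : (Fin n → ℕ) → K) : (Fin n → ℕ) → K :=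
  fun t => c⁻¹ * (fdiff n i f t - (c - 1) * f t)

/-- The operator `∏ᵢ (λᵢ⁻¹(Δ_i − λᵢ + 1))^{μᵢ}` on functions `ℕ^n → K`. -/
noncomputable def chiDiffPow {K : Type*} [Field K] (n : ℕ) (lam : Fin n → K)
    (μ : Fin n → ℕ) (f : (Fin n → ℕ) → K) : (Fin n → ℕ) → K :=
  (List.finRange n).foldr (fun i g => (chiDiff n (lam i) i)^[μ i] g) f

/-- For `a = ∑_μ q_μ Δ^μ`, the action of
`χ_λ(a) = ∑_μ q_μ ∏ᵢ (λᵢ⁻¹(Δᵢ − λᵢ + 1))^{μᵢ}` on functions `ℕ^n → K`. -/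
noncomputable def chiAct {K : Type*} [Field K] (n : ℕ) (lam : Fin n → K)
    (a : (Fin n → ℕ) →₀ MvPolynomial (Fin n) K) (f : (Fin n → ℕ) → K) :
    (Fin n → ℕ) → K :=
  fun t => a.sum fun μ q => evalN q t * chiDiffPow n lam μ f t

/-! Multiplication by `exp_λ` intertwines `Δᵢ` with `λᵢ⁻¹(Δᵢ − λᵢ + 1)`, because
`exp_λ(t + eᵢ) = λᵢ exp_λ(t)`; hence it intertwines `Δ^μ` with the corresponding
product, and `a` with `χ_λ(a)`. The identity holds for every function, not only for
polynomials, and the equivalence follows since `exp_λ` does not vanish. -/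

section Twist

variable {K : Type*} [Field K] {n : ℕ}

lemma expD_add_single (lam : Fin n → K) (i : Fin n) (t : Fin n → ℕ) :
    expD lam (t + Pi.single i 1) = lam i * expD lam t := by
  simp only [expD, Pi.add_apply, pow_add, Finset.prod_mul_distrib, mul_comm (lam i)]
  congr 1
  simp [Pi.single_apply]

lemma expD_ne_zero {lam : Fin n → K} (hlam : ∀ i, lam i ≠ 0) (t : Fin n → ℕ) :
    expD lam t ≠ 0 :=
  Finset.prod_ne_zero_iff.2 fun i _ => pow_ne_zero _ (hlam i)

lemma semiconj_mul_expD_fdiff_chiDiff {lam : Fin n → K} {i : Fin n} (hi : lam i ≠ 0) :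
    Function.Semiconj (fun (f : (Fin n → ℕ) → K) s => f s * expD lam s)
      (fdiff n i) (chiDiff n (lam i) i) := by
  intro f
  funext t
  simp only [chiDiff, fdiff, expD_add_single]
  field_simp
  ring

lemma chiDiffPow_mul_expD {lam : Fin n → K} (hlam : ∀ i, lam i ≠ 0) (μ : Fin n → ℕ)
    (f : (Fin n → ℕ) → K) :
    chiDiffPow n lam μ (fun s => f s * expD lam s)
      = fun t => fdiffPow n μ f t * expD lam t :=
  List.foldr_hom (fun (g : (Fin n → ℕ) → K) s => g s * expD lam s) fun i g =>
    ((semiconj_mul_expD_fdiff_chiDiff (hlam i)).iterate_right (μ i) g).symm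

lemma chiAct_mul_expD {lam : Fin n → K} (hlam : ∀ i, lam i ≠ 0)
    (a : (Fin n → ℕ) →₀ MvPolynomial (Fin n) K) (f : (Fin n → ℕ) → K) (t : Fin n → ℕ) :
    chiAct n lam a (fun s => f s * expD lam s) t = diffAct n a f t * expD lam t := by
  simp only [chiAct, diffAct, Finsupp.sum, Finset.sum_mul, chiDiffPow_mul_expD hlam, mul_assoc]

end Twist

theorem chi_lambda_twist_identity_general {K : Type*} [Field K] {n : ℕ}
    (lam : Fin n → K) (hlam : ∀ i, lam i ≠ 0)
    (a : (Fin n → ℕ) →₀ MvPolynomial (Fin n) K) (p : MvPolynomial (Fin n) K) :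
    (∀ t : Fin n → ℕ,
      chiAct n lam a (fun s => evalN p s * expD lam s) t
        = diffAct n a (fun s => evalN p s) t * expD lam t) ∧
    ((∀ t : Fin n → ℕ, diffAct n a (fun s => evalN p s) t = 0) ↔
      (∀ t : Fin n → ℕ, chiAct n lam a (fun s => evalN p s * expD lam s) t = 0)) := by
  have twist := chiAct_mul_expD hlam a (fun s => evalN p s)
  refine ⟨twist, forall_congr' fun t => ?_⟩
  rw [twist t, mul_eq_zero, or_iff_left (expD_ne_zero hlam t)]

/-- Let `K` be an infinite field and `λ ∈ (K∖{0})^n`. For every linear difference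
operator with polynomial coefficients `a` and every polynomial `p` (identified with the
function `ℕ^n → K` it defines), `χ_λ(a)(p·exp_λ) = (a p)·exp_λ` as functions
`ℕ^n → K`; consequently `a p = 0` if and only if `χ_λ(a)(p·exp_λ) = 0`. -/
theorem chi_lambda_twist_identity {K : Type*} [Field K] [Infinite K] {n : ℕ}
    (lam : Fin n → K) (hlam : ∀ i, lam i ≠ 0)
    (a : (Fin n → ℕ) →₀ MvPolynomial (Fin n) K) (p : MvPolynomial (Fin n) K) :
    (∀ t : Fin n → ℕ,
      chiAct n lam a (fun s => evalN p s * expD lam s) t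
        = diffAct n a (fun s => evalN p s) t * expD lam t) ∧
    ((∀ t : Fin n → ℕ, diffAct n a (fun s => evalN p s) t = 0) ↔
      (∀ t : Fin n → ℕ, chiAct n lam a (fun s => evalN p s * expD lam s) t = 0)) :=
  chi_lambda_twist_identity_general lam hlam a p
end
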